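/- arXiv:1101.5072 — 3 statements merged into one kernel-verified Lean document; each statement's English description precedes it below -/
import Mathlib

section
/- For all real numbers z ≥ y ≥ 1 with z > 1 and 0 < α ≤ 1, one has (y(z^α - 1) + 1)/(y((z-1)^α - 1) + 1) ≥ z^α/(z-1)^α. -/
open Real

theorem stmt_0 (α y z : ℝ) (hα0 : 0 < α) (hα1 : α ≤ 1)
    (hy : 1 ≤ y) (hyz : y ≤ z) (hz : 1 < z) :
    (y * (z ^ α - 1) + 1) / (y * ((z - 1) ^ α - 1) + 1) ≥ z ^ α / (z - 1) ^ α := by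
  have hz1 : (0:ℝ) < z - 1 := by linarith
  have hb : (0:ℝ) < (z - 1) ^ α := rpow_pos_of_pos hz1 _
  have hab : (z - 1) ^ α ≤ z ^ α :=
    rpow_le_rpow (le_of_lt hz1) (by linarith) hα0.le
  -- (z-1)^α ≥ min (z-1) 1 style bound: if z-1 ≤ 1 then (z-1)^α ≥ z-1
  have hblb : z - 1 ≤ (z - 1) ^ α ∨ 1 ≤ (z - 1) ^ α := by
    rcases le_or_gt (z - 1) 1 with h | h
    · left
      calc z - 1 = (z - 1) ^ (1:ℝ) := (rpow_one _).symm
        _ ≤ (z - 1) ^ α := rpow_le_rpow_of_exponent_ge hz1 h hα1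
    · right
      exact one_le_rpow h.le hα0.le
  have hd : 0 < y * ((z - 1) ^ α - 1) + 1 := by
    rcases hblb with h | h
    · nlinarith [mul_le_mul_of_nonneg_left h (by linarith : (0:ℝ) ≤ y),
        mul_nonneg (by linarith : (0:ℝ) ≤ y - 1) (by linarith : (0:ℝ) ≤ z - 1)]
    · nlinarith
  rw [ge_iff_le, div_le_div_iff₀ hb hd]
  nlinarith [mul_nonneg (sub_nonneg.2 hy) (sub_nonneg.2 hab)]
end

section
/- For all real numbers z ≥ y ≥ 1 and 0 < α ≤ 1, one has (y z^α - y + 1)^{1/α} - (y(z-1)^α - y + 1)^{1/α} ≥ 1. -/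
/-!
Put `p = 1 / α ≥ 1`, `c = (z - 1) ^ α` and `d = z ^ α`, so that `d ^ p - c ^ p = 1`. The two bases
are `B = y * c - y + 1 ≥ 0` and `A = B + y * (d - c)`, and we compare the increment of the convex,
increasing function `t ↦ t ^ p` over `[B, A]` with its increment over `[c, d]`. If `c ≤ 1`, then
`[c, d] ⊆ [B, A]`. If `c ≥ 1`, then `[B, A]` lies to the right of `[c, d]` and is longer, so
convexity gives the larger increment.
-/

open Real

theorem ConvexOn.slope_le_slope_of_le {s : Set ℝ} {f : ℝ → ℝ} (hf : ConvexOn ℝ s f)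
    {a b c d : ℝ} (ha : a ∈ s) (hb : b ∈ s) (hc : c ∈ s) (hd : d ∈ s)
    (hab : a < b) (hcd : c < d) (hac : a ≤ c) (hbd : b ≤ d) :
    slope f a b ≤ slope f c d :=
  calc slope f a b ≤ slope f a d :=
        hf.slope_mono ha ⟨hb, hab.ne'⟩ ⟨hd, (hab.trans_le hbd).ne'⟩ hbd
    _ = slope f d a := slope_comm f a d
    _ ≤ slope f d c :=
        hf.slope_mono hd ⟨ha, (hab.trans_le hbd).ne⟩ ⟨hc, hcd.ne⟩ hac
    _ = slope f c d := slope_comm f d c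

theorem rpow_sub_rpow_le_rpow_sub_rpow {p a b c d : ℝ} (hp : 1 ≤ p) (ha : 0 ≤ a) (hab : a < b)
    (hac : a ≤ c) (hbd : b ≤ d) (hlen : b - a ≤ d - c) :
    b ^ p - a ^ p ≤ d ^ p - c ^ p := by
  have hcd : c < d := by linarith
  have hc : 0 ≤ c := ha.trans hac
  have hslope := (convexOn_rpow hp).slope_le_slope_of_le ha (ha.trans hab.le) hc
    (hc.trans hcd.le) hab hcd hac hbd
  simp only [slope_def_field] at hslope
  have hslope_nonneg : 0 ≤ (b ^ p - a ^ p) / (b - a) :=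
    div_nonneg (sub_nonneg.2 (rpow_le_rpow ha hab.le (by linarith))) (by linarith)
  calc b ^ p - a ^ p = (b - a) * ((b ^ p - a ^ p) / (b - a)) := by
        field_simp [(sub_pos.2 hab).ne']
    _ ≤ (d - c) * ((d ^ p - c ^ p) / (d - c)) := by gcongr
    _ = d ^ p - c ^ p := by field_simp [(sub_pos.2 hcd).ne']

theorem mul_sub_one_rpow_sub_add_one_nonneg {α y z : ℝ} (hα0 : 0 ≤ α) (hα1 : α ≤ 1)
    (hy : 1 ≤ y) (hyz : y ≤ z) :
    0 ≤ y * (z - 1) ^ α - y + 1 := by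
  have hx0 : 0 ≤ (y - 1) / y := div_nonneg (by linarith) (by linarith)
  have hx1 : (y - 1) / y ≤ 1 := (div_le_one₀ (by linarith)).2 (by linarith)
  have hxy : (y - 1) / y ≤ y - 1 := div_le_self (by linarith) hy
  have key : (y - 1) / y ≤ (z - 1) ^ α :=
    calc (y - 1) / y ≤ ((y - 1) / y) ^ α := self_le_rpow_of_le_one hx0 hx1 hα1
      _ ≤ (z - 1) ^ α := rpow_le_rpow hx0 (by linarith) hα0
  have : y - 1 ≤ y * (z - 1) ^ α := by
    rwa [div_le_iff₀' (by linarith)] at key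
  linarith

theorem stmt_1 (α y z : ℝ) (hα0 : 0 < α) (hα1 : α ≤ 1)
    (hy : 1 ≤ y) (hyz : y ≤ z) :
    (y * z ^ α - y + 1) ^ (1 / α) - (y * (z - 1) ^ α - y + 1) ^ (1 / α) ≥ 1 := by
  have hz : 1 ≤ z := hy.trans hyz
  have hp : 1 ≤ 1 / α := by rw [le_div_iff₀ hα0]; linarith
  have hB := mul_sub_one_rpow_sub_add_one_nonneg hα0.le hα1 hy hyz
  set c := (z - 1) ^ α
  set d := z ^ α
  have hc : 0 ≤ c := rpow_nonneg (by linarith) α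
  have hd : 1 ≤ d := one_le_rpow hz hα0.le
  have hcd : c < d := rpow_lt_rpow (by linarith) (by linarith) hα0
  have hone : d ^ (1 / α) - c ^ (1 / α) = 1 := by
    rw [one_div, rpow_rpow_inv (by linarith) hα0.ne', rpow_rpow_inv (by linarith) hα0.ne']
    ring
  suffices d ^ (1 / α) - c ^ (1 / α) ≤
      (y * d - y + 1) ^ (1 / α) - (y * c - y + 1) ^ (1 / α) by linarith
  rcases le_total c 1 with hc1 | hc1
  · gcongr
    · nlinarith
    · nlinarith
  · exact rpow_sub_rpow_le_rpow_sub_rpow (c := y * c - y + 1) (d := y * d - y + 1) hp hc hcd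
      (by nlinarith) (by nlinarith) (by nlinarith)
end

section
/- Let 0 < α ≤ 1 and let ℓ : [1,∞) → [2,∞) be a nondecreasing function with ℓ(s) ≥ 2 for all s. Then for all t ≥ s ≥ 1, (ℓ(t)(t-s)^α - ℓ(t) s^α + ℓ(s) s^α)^{1/α} ≤ (ℓ(t) t^α - ℓ(t) s^α + ℓ(s) s^α)^{1/α} - ℓ(s)^{1/α} · s, provided the expression ℓ(t)(t-s)^α - ℓ(t)s^α + ℓ(s)s^α is nonnegative. -/
/-!
With `y = ℓ(t)/ℓ(s) ≥ 1` and `z = t/s ≥ 1`, both bases factor as `ℓ(s) s^α · (y v^α - y + 1)` with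
`v = z - 1`, resp. `v = z`, so the claim reduces to
`(y (z-1)^α - y + 1)^{1/α} + 1 ≤ (y z^α - y + 1)^{1/α}`.
This follows from the monotonicity of `u ↦ (y u^α - y + 1)^{1/α} - u` on `[1, ∞)`: its derivative is
`y u^{α-1} (y u^α - y + 1)^{1/α-1} - 1 ≥ 0` because `y u^α - y + 1 ≥ u^α` and `1/α - 1 ≥ 0`.
For `z < 2` one compares with `u = 1` instead, using `y (z-1)^α - y + 1 ≤ (z-1)^α`.
-/

open Real Set

lemma le_mul_sub_add_one {y v : ℝ} (hy : 1 ≤ y) (hv : 1 ≤ v) : v ≤ y * v - y + 1 := by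
  nlinarith [mul_nonneg (sub_nonneg.2 hy) (sub_nonneg.2 hv)]

lemma mul_sub_add_one_le {y v : ℝ} (hy : 1 ≤ y) (hv : v ≤ 1) : y * v - y + 1 ≤ v := by
  nlinarith [mul_nonneg (sub_nonneg.2 hy) (sub_nonneg.2 hv)]

section

variable {α y : ℝ}

lemma hasDerivAt_rpow_affine_rpow_sub {u : ℝ} (hu : 0 < u) (hA : y * u ^ α - y + 1 ≠ 0) :
    HasDerivAt (fun v => (y * v ^ α - y + 1) ^ (1 / α) - v)
      (y * (α * u ^ (α - 1)) * (1 / α) * (y * u ^ α - y + 1) ^ (1 / α - 1) - 1) u := by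
  have hinner : HasDerivAt (fun v => y * v ^ α - y + 1) (y * (α * u ^ (α - 1))) u := by
    simpa using (((hasDerivAt_rpow_const (Or.inl hu.ne')).const_mul y).sub_const y).add_const 1
  exact (hinner.rpow_const (Or.inl hA)).sub (hasDerivAt_id' u)

lemma one_le_deriv_rpow_affine_rpow (hα0 : 0 < α) (hα1 : α ≤ 1) (hy : 1 ≤ y) {u : ℝ}
    (hu : 1 ≤ u) :
    1 ≤ y * (α * u ^ (α - 1)) * (1 / α) * (y * u ^ α - y + 1) ^ (1 / α - 1) := by
  have hu0 : 0 < u := zero_lt_one.trans_le hu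
  have hexp : 0 ≤ 1 / α - 1 := by rw [sub_nonneg, le_div_iff₀ hα0, one_mul]; exact hα1
  have hbase : u ^ (1 - α) ≤ (y * u ^ α - y + 1) ^ (1 / α - 1) := by
    have hrw : u ^ (1 - α) = (u ^ α) ^ (1 / α - 1) := by
      rw [← rpow_mul hu0.le]; congr 1; field_simp
    rw [hrw]
    exact rpow_le_rpow (by positivity) (le_mul_sub_add_one hy (one_le_rpow hu hα0.le)) hexp
  have hcancel : u ^ (α - 1) * u ^ (1 - α) = 1 := by rw [← rpow_add hu0]; norm_num
  calc (1 : ℝ) ≤ y * (u ^ (α - 1) * u ^ (1 - α)) := by rw [hcancel, mul_one]; exact hy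
    _ ≤ y * u ^ (α - 1) * (y * u ^ α - y + 1) ^ (1 / α - 1) := by
      rw [← mul_assoc]; gcongr
    _ = y * (α * u ^ (α - 1)) * (1 / α) * (y * u ^ α - y + 1) ^ (1 / α - 1) := by
      field_simp

theorem monotoneOn_rpow_affine_rpow_sub (hα0 : 0 < α) (hα1 : α ≤ 1) (hy : 1 ≤ y) :
    MonotoneOn (fun u => (y * u ^ α - y + 1) ^ (1 / α) - u) (Ici 1) := by
  have hderiv : ∀ u : ℝ, 1 ≤ u → HasDerivAt (fun v => (y * v ^ α - y + 1) ^ (1 / α) - v)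
      (y * (α * u ^ (α - 1)) * (1 / α) * (y * u ^ α - y + 1) ^ (1 / α - 1) - 1) u :=
    fun u hu => hasDerivAt_rpow_affine_rpow_sub (zero_lt_one.trans_le hu)
      (by linarith [le_mul_sub_add_one hy (one_le_rpow hu hα0.le), one_le_rpow hu hα0.le])
  refine monotoneOn_of_hasDerivWithinAt_nonneg (f' := fun u =>
      y * (α * u ^ (α - 1)) * (1 / α) * (y * u ^ α - y + 1) ^ (1 / α - 1) - 1) (convex_Ici 1)
    (fun u hu => (hderiv u hu).continuousAt.continuousWithinAt) (fun u hu => ?_) (fun u hu => ?_)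
  · rw [interior_Ici] at hu
    exact (hderiv u (le_of_lt hu)).hasDerivWithinAt
  · rw [interior_Ici] at hu
    linarith [one_le_deriv_rpow_affine_rpow hα0 hα1 hy (le_of_lt hu)]

theorem rpow_affine_rpow_sub_one_add_one_le (hα0 : 0 < α) (hα1 : α ≤ 1) (hy : 1 ≤ y) {z : ℝ}
    (hz : 1 ≤ z) (hB : 0 ≤ y * (z - 1) ^ α - y + 1) :
    (y * (z - 1) ^ α - y + 1) ^ (1 / α) + 1 ≤ (y * z ^ α - y + 1) ^ (1 / α) := by
  have hmono := monotoneOn_rpow_affine_rpow_sub hα0 hα1 hy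
  rcases le_or_gt 2 z with hz2 | hz2
  · have := hmono (show (1 : ℝ) ≤ z - 1 by linarith) hz (by linarith)
    simp only at this
    linarith
  · have hz0 : 0 ≤ z - 1 := by linarith
    have hsmall : (y * (z - 1) ^ α - y + 1) ^ (1 / α) ≤ z - 1 := by
      calc (y * (z - 1) ^ α - y + 1) ^ (1 / α) ≤ ((z - 1) ^ α) ^ (1 / α) :=
            rpow_le_rpow hB (mul_sub_add_one_le hy (rpow_le_one hz0 (by linarith) hα0.le))
              (by positivity)
        _ = z - 1 := by rw [one_div, rpow_rpow_inv hz0 hα0.ne']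
    have := hmono (self_mem_Ici (a := (1 : ℝ))) hz hz
    simp only [one_rpow, mul_one, sub_self, zero_add] at this
    linarith

lemma mul_rpow_sub_add_eq_mul {a b s x : ℝ} (ha : 0 < a) (hs : 0 < s) (hx : 0 ≤ x) :
    b * x ^ α - b * s ^ α + a * s ^ α = a * s ^ α * (b / a * (x / s) ^ α - b / a + 1) := by
  rw [div_rpow hx hs.le]
  field_simp

lemma mul_rpow_rpow_one_div {a s : ℝ} (hα : α ≠ 0) (ha : 0 ≤ a) (hs : 0 ≤ s) :
    (a * s ^ α) ^ (1 / α) = a ^ (1 / α) * s := by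
  rw [mul_rpow ha (by positivity), one_div, rpow_rpow_inv hs hα]

end

theorem stmt_2 (α : ℝ) (hα0 : 0 < α) (hα1 : α ≤ 1) (ℓ : ℝ → ℝ)
    (hmono : ∀ s t : ℝ, 1 ≤ s → s ≤ t → ℓ s ≤ ℓ t)
    (hℓ2 : ∀ s : ℝ, 1 ≤ s → 2 ≤ ℓ s)
    (s t : ℝ) (hs : 1 ≤ s) (hst : s ≤ t)
    (hnonneg : 0 ≤ ℓ t * (t - s) ^ α - ℓ t * s ^ α + ℓ s * s ^ α) :
    (ℓ t * (t - s) ^ α - ℓ t * s ^ α + ℓ s * s ^ α) ^ (1 / α)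
      ≤ (ℓ t * t ^ α - ℓ t * s ^ α + ℓ s * s ^ α) ^ (1 / α) - (ℓ s) ^ (1 / α) * s := by
  have hs0 : 0 < s := zero_lt_one.trans_le hs
  have hℓs : 0 < ℓ s := two_pos.trans_le (hℓ2 s hs)
  have hy : 1 ≤ ℓ t / ℓ s := (one_le_div hℓs).2 (hmono s t hs hst)
  have hz : 1 ≤ t / s := (one_le_div hs0).2 hst
  have hz1 : t / s - 1 = (t - s) / s := by field_simp
  rw [mul_rpow_sub_add_eq_mul hℓs hs0 (sub_nonneg.2 hst), ← hz1] at hnonneg ⊢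
  rw [mul_rpow_sub_add_eq_mul hℓs hs0 (hs0.le.trans hst)]
  have hB := nonneg_of_mul_nonneg_right hnonneg (by positivity)
  have hA : 0 ≤ ℓ t / ℓ s * (t / s) ^ α - ℓ t / ℓ s + 1 := by
    linarith [le_mul_sub_add_one hy (one_le_rpow hz hα0.le), one_le_rpow hz hα0.le]
  rw [mul_rpow (by positivity) hB, mul_rpow (by positivity) hA,
    mul_rpow_rpow_one_div hα0.ne' hℓs.le hs0.le]
  have hkey := rpow_affine_rpow_sub_one_add_one_le hα0 hα1 hy hz hB
  linarith [mul_le_mul_of_nonneg_left hkey (by positivity : 0 ≤ ℓ s ^ (1 / α) * s)]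
end
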